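/- arXiv:2202.13783 — 7 statements merged into one kernel-verified Lean document; each statement's English description precedes it below -/
import Mathlib

section
/- Let m be a positive integer. If N = 16m² + 1 is composite, then there exists a natural number b with 4b + 1 ≤ √N (equivalently (4b+1)² ≤ N) such that m² + b² ≡ 0 (mod 4b + 1); moreover 4b + 1 is a proper factor of N (i.e., 1 < 4b + 1 < N and (4b+1) ∣ N). -/
/-!
Take for `4b + 1` the least prime factor `p` of `N`; since `N` is composite, `p² ≤ N`. As `p` divides
`(4m)² + 1`, `-1` is a square mod `p`, so `p ≡ 1 (mod 4)`. Finally
`16 (m² + b²) + p = N + 4b p`, and `p` is odd, so `p ∣ m² + b²`.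
-/

theorem Nat.Prime.mod_four_eq_one_of_dvd_sq_add_one {p n : ℕ} (hp : p.Prime) (hp2 : p ≠ 2)
    (h : p ∣ n ^ 2 + 1) : p % 4 = 1 := by
  have := Fact.mk hp
  have hsq : (n : ZMod p) ^ 2 = -1 := by
    have h0 : ((n ^ 2 + 1 : ℕ) : ZMod p) = 0 := (ZMod.natCast_eq_zero_iff _ _).2 h
    push_cast at h0
    linear_combination h0
  have hne3 := ZMod.mod_four_ne_three_of_sq_eq_neg_one hsq
  have hodd := Nat.odd_iff.mp (hp.odd_of_ne_two hp2)
  omega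

theorem four_mul_add_one_dvd_sq_add_sq {m b : ℕ} (h : 4 * b + 1 ∣ 16 * m ^ 2 + 1) :
    4 * b + 1 ∣ m ^ 2 + b ^ 2 := by
  have hsum : 4 * b + 1 ∣ 16 * (m ^ 2 + b ^ 2) + (4 * b + 1) := by
    have key : 16 * (m ^ 2 + b ^ 2) + (4 * b + 1) = (16 * m ^ 2 + 1) + 4 * b * (4 * b + 1) := by
      ring
    exact key ▸ dvd_add h (dvd_mul_left _ _)
  have hcop : Nat.Coprime (4 * b + 1) 16 :=
    Nat.Coprime.pow_right 4 (Nat.coprime_two_right.2 ⟨2 * b, by ring⟩)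
  exact hcop.dvd_of_dvd_mul_left ((Nat.dvd_add_left dvd_rfl).1 hsum)

theorem stmt_0 (m : ℕ) (hm : 0 < m) (N : ℕ) (hN : N = 16 * m ^ 2 + 1)
    (hcomp : ¬ N.Prime) :
    ∃ b : ℕ, (4 * b + 1) ^ 2 ≤ N ∧
      (4 * b + 1) ∣ (m ^ 2 + b ^ 2) ∧
      (4 * b + 1) ∣ N ∧ 1 < 4 * b + 1 ∧ 4 * b + 1 < N := by
  have hN2 : 2 ≤ N := by
    have := pow_pos hm 2
    omega
  have hp : N.minFac.Prime := Nat.minFac_prime (by omega)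
  have hpN : N.minFac ∣ N := Nat.minFac_dvd N
  have hp2 : N.minFac ≠ 2 := fun h ↦ by
    have := h ▸ hpN
    omega
  have hp4 : N.minFac % 4 = 1 :=
    hp.mod_four_eq_one_of_dvd_sq_add_one hp2 (n := 4 * m) (by convert hpN using 1; rw [hN]; ring)
  obtain ⟨b, hb⟩ : ∃ b, N.minFac = 4 * b + 1 := ⟨N.minFac / 4, by omega⟩
  rw [hb] at hp hpN
  refine ⟨b, hb ▸ Nat.minFac_sq_le_self (by omega) hcomp,
    four_mul_add_one_dvd_sq_add_sq (hN ▸ hpN), hpN, hp.one_lt, ?_⟩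
  exact hb ▸ (Nat.not_prime_iff_minFac_lt hN2).1 hcomp
end

section
/- Let m be a positive integer. If N = 16m² + 1 is composite, then there exists a positive integer u such that (8u + 1)² − N is a perfect square and N = (8u + 1 + √((8u + 1)² − N)) · (8u + 1 − √((8u + 1)² − N)), with both factors being proper factors of N. -/
/-!
Since `N = (4m)² + 1`, `-1` is a square modulo every prime factor of `N`, so all divisors of `N`
are `≡ 1 (mod 4)`. For a factorization `N = a b` with `1 < a ≤ b`, writing `a = 4x + 1`,
`b = 4y + 1` gives `a + b ≡ ab + 1 ≡ 2 (mod 16)`, so `s = (a + b)/2 ≡ 1 (mod 8)`, and with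
`d = (b - a)/2` we get `N = s² - d² = (s + d)(s - d)` with `s + d = b` and `s - d = a`.
-/

theorem Nat.mod_four_eq_one_of_dvd_sq_add_one {k n : ℕ} (hodd : Odd k) (hdvd : k ∣ n ^ 2 + 1) :
    k % 4 = 1 := by
  induction k using Nat.recOnMul with
  | zero => simp at hodd
  | one => rfl
  | prime p hp =>
    have := Fact.mk hp
    have hsq : (n : ZMod p) ^ 2 = -1 := by
      rw [eq_neg_iff_add_eq_zero]
      exact_mod_cast (ZMod.natCast_eq_zero_iff _ p).mpr hdvd
    have := ZMod.mod_four_ne_three_of_sq_eq_neg_one hsq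
    obtain ⟨k, rfl⟩ := hodd
    omega
  | mul a b ha hb =>
    rw [Nat.odd_mul] at hodd
    rw [Nat.mul_mod, ha hodd.1 (dvd_of_mul_right_dvd hdvd), hb hodd.2 (dvd_of_mul_left_dvd hdvd)]

theorem Nat.add_mod_sixteen_eq_mul_add_one_mod {a b : ℕ} (ha : a % 4 = 1) (hb : b % 4 = 1) :
    (a + b) % 16 = (a * b + 1) % 16 := by
  obtain ⟨x, rfl⟩ : ∃ x, a = 4 * x + 1 := ⟨a / 4, by omega⟩
  obtain ⟨y, rfl⟩ : ∃ y, b = 4 * y + 1 := ⟨b / 4, by omega⟩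
  have : (4 * x + 1) * (4 * y + 1) + 1 = 4 * x + 1 + (4 * y + 1) + 16 * (x * y) := by ring
  rw [this, Nat.add_mul_mod_self_left]

theorem Nat.exists_mul_eq_of_not_prime {N : ℕ} (hN : 2 ≤ N) (hcomp : ¬ N.Prime) :
    ∃ a b, 1 < a ∧ a ≤ b ∧ N = a * b := by
  refine ⟨N.minFac, N / N.minFac, (Nat.minFac_prime (by omega)).one_lt, ?_,
    (Nat.mul_div_cancel' N.minFac_dvd).symm⟩
  rw [Nat.le_div_iff_mul_le N.minFac_pos, ← sq]
  exact Nat.minFac_sq_le_self (by omega) hcomp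

theorem stmt_1 (m : ℕ) (hm : 0 < m) (N : ℕ) (hN : N = 16 * m ^ 2 + 1)
    (hcomp : ¬ N.Prime) :
    ∃ u : ℕ, 0 < u ∧ ∃ d : ℕ, (8 * u + 1) ^ 2 = N + d ^ 2 ∧
      N = (8 * u + 1 + d) * (8 * u + 1 - d) ∧
      ((8 * u + 1 + d) ∣ N ∧ 1 < 8 * u + 1 + d ∧ 8 * u + 1 + d < N) ∧
      ((8 * u + 1 - d) ∣ N ∧ 1 < 8 * u + 1 - d ∧ 8 * u + 1 - d < N) := by
  obtain ⟨a, b, ha, hab, rfl⟩ := Nat.exists_mul_eq_of_not_prime (by nlinarith) hcomp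
  have hsq : a * b = (4 * m) ^ 2 + 1 := by rw [hN]; ring
  have hodd : Odd a ∧ Odd b := by
    rw [← Nat.odd_mul, hsq]; exact ⟨8 * m ^ 2, by ring⟩
  have ha4 := Nat.mod_four_eq_one_of_dvd_sq_add_one hodd.1 (hsq ▸ dvd_mul_right a b)
  have hb4 := Nat.mod_four_eq_one_of_dvd_sq_add_one hodd.2 (hsq ▸ dvd_mul_left b a)
  have h16 : (a + b) % 16 = 2 := by
    rw [Nat.add_mod_sixteen_eq_mul_add_one_mod ha4 hb4, hN]; omega
  obtain ⟨d, rfl⟩ : ∃ d, b = a + 2 * d := ⟨(b - a) / 2, by omega⟩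
  obtain ⟨u, hu⟩ : ∃ u, a + d = 8 * u + 1 := ⟨(a + d) / 8, by omega⟩
  have hsub : a + d - d = a := Nat.add_sub_cancel a d
  have hadd : a + d + d = a + 2 * d := by ring
  refine ⟨u, by omega, d, ?_, ?_, ⟨?_, ?_, ?_⟩, ⟨?_, ?_, ?_⟩⟩ <;> rw [← hu]
  · ring
  · rw [hsub, hadd, mul_comm]
  · rw [hadd]; exact dvd_mul_left _ _
  · omega
  · rw [hadd]; exact lt_mul_left (by omega) ha
  · rw [hsub]; exact dvd_mul_right _ _
  · omega
  · rw [hsub]; exact lt_mul_right (by omega) (by omega)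
end

section
/- Let m be a positive integer and N = 16m² + 1 be composite. Then every proper factor of N can be expressed as 8u + 1 + √((8u + 1)² − N) or 8u + 1 − √((8u + 1)² − N) for some positive integer u such that (8u + 1)² − N is a perfect square, N ≤ (8u + 1)², and 40u + 5 ≤ N. -/
/-!
Every divisor of `N = (4m)² + 1` is `≡ 1 (mod 4)`, since `-1` is a square modulo it. So a
factorisation reads `N = (4a+1)(4b+1) = 16ab + 4(a+b) + 1`, and `N ≡ 1 (mod 16)` forces
`a + b = 4u`. Then `8u + 1` is the mean of the two factors and `2|a - b|` half their difference,
whence `(8u+1)² = N + (2|a - b|)²`.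
-/

theorem ZMod.isSquare_neg_one_sq_add_one (n : ℕ) : IsSquare (-1 : ZMod (n ^ 2 + 1)) := by
  refine ⟨n, ?_⟩
  have h : ((n ^ 2 + 1 : ℕ) : ZMod (n ^ 2 + 1)) = 0 := ZMod.natCast_self _
  push_cast at h
  linear_combination -h

theorem Nat.mod_four_eq_one_of_isSquare_neg_one {n : ℕ} (hn : Odd n)
    (hs : IsSquare (-1 : ZMod n)) : n % 4 = 1 := by
  induction n using induction_on_primes with
  | zero => exact absurd hn (by decide)
  | one => rfl
  | prime_mul p a hp ih =>
    have : Fact p.Prime := ⟨hp⟩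
    have hp4 : p % 4 ≠ 3 :=
      ZMod.exists_sq_eq_neg_one_iff.mp (ZMod.isSquare_neg_one_of_dvd (dvd_mul_right p a) hs)
    have hp2 : p % 2 = 1 := Nat.odd_iff.mp (Nat.Odd.of_mul_left hn)
    have ha4 : a % 4 = 1 :=
      ih (Nat.Odd.of_mul_right hn) (ZMod.isSquare_neg_one_of_dvd (dvd_mul_left a p) hs)
    rw [Nat.mul_mod, ha4]
    omega

theorem Nat.mod_four_eq_one_of_dvd_sq_add_one_s7 {d n : ℕ} (hn : Even n) (hd : d ∣ n ^ 2 + 1) :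
    d % 4 = 1 :=
  Nat.mod_four_eq_one_of_isSquare_neg_one
    ((by simpa [parity_simps] using hn : Odd (n ^ 2 + 1)).of_dvd_nat hd)
    (ZMod.isSquare_neg_one_of_dvd hd (ZMod.isSquare_neg_one_sq_add_one n))

theorem sq_two_mul_add_add_one_eq (a b : ℕ) (h : b ≤ a) :
    (2 * (a + b) + 1) ^ 2 = (4 * a + 1) * (4 * b + 1) + (2 * (a - b)) ^ 2 := by
  obtain ⟨c, rfl⟩ := Nat.exists_eq_add_of_le h
  rw [Nat.add_sub_cancel_left]
  ring

theorem exists_sq_eq_mul_add_sq (a b u : ℕ) (hu : a + b = 4 * u) :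
    ∃ d, (8 * u + 1) ^ 2 = (4 * a + 1) * (4 * b + 1) + d ^ 2 ∧
      (4 * a + 1 = 8 * u + 1 + d ∨ 4 * a + 1 = 8 * u + 1 - d) := by
  have h8u : 8 * u = 2 * (a + b) := by omega
  rcases le_total b a with hba | hab
  · exact ⟨2 * (a - b), h8u ▸ sq_two_mul_add_add_one_eq a b hba, Or.inl (by omega)⟩
  · refine ⟨2 * (b - a), ?_, Or.inr (by omega)⟩
    rw [h8u, add_comm a b, mul_comm (4 * a + 1)]
    exact sq_two_mul_add_add_one_eq b a hab

theorem ten_mul_add_add_five_le (a b : ℕ) (ha : 1 ≤ a) (hb : 1 ≤ b) :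
    10 * (a + b) + 5 ≤ (4 * a + 1) * (4 * b + 1) := by
  nlinarith

theorem stmt_7_general (m : ℕ) (N : ℕ) (hN : N = 16 * m ^ 2 + 1) :
    ∀ f : ℕ, f ∣ N → 1 < f → f < N →
      ∃ u d : ℕ, 0 < u ∧ (8 * u + 1) ^ 2 = N + d ^ 2 ∧
        N ≤ (8 * u + 1) ^ 2 ∧ 40 * u + 5 ≤ N ∧
        (f = 8 * u + 1 + d ∨ f = 8 * u + 1 - d) := by
  rintro f ⟨g, hfg⟩ hf1 hfN
  have hN4 : N = (4 * m) ^ 2 + 1 := by rw [hN]; ring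
  have hm4 : Even (4 * m) := (by decide : Even 4).mul_right m
  have hf4 := Nat.mod_four_eq_one_of_dvd_sq_add_one_s7 hm4 (hN4 ▸ Dvd.intro g hfg.symm)
  have hg4 := Nat.mod_four_eq_one_of_dvd_sq_add_one_s7 hm4 (hN4 ▸ Dvd.intro_left f hfg.symm)
  obtain ⟨a, rfl⟩ : ∃ a, f = 4 * a + 1 := ⟨f / 4, by omega⟩
  obtain ⟨b, rfl⟩ : ∃ b, g = 4 * b + 1 := ⟨g / 4, by omega⟩
  have hb : 1 ≤ b := by
    by_contra! hb0
    rw [Nat.lt_one_iff.mp hb0, mul_zero, zero_add, mul_one] at hfg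
    omega
  obtain ⟨u, hu⟩ : 4 ∣ a + b := by
    have : N = 16 * (a * b) + 4 * (a + b) + 1 := by rw [hfg]; ring
    omega
  obtain ⟨d, hd, hf⟩ := exists_sq_eq_mul_add_sq a b u hu
  refine ⟨u, d, by omega, hfg ▸ hd, hfg ▸ hd ▸ Nat.le_add_right _ _, ?_, hf⟩
  have := ten_mul_add_add_five_le a b (by omega) hb
  omega

theorem stmt_7 (m : ℕ) (hm : 0 < m) (N : ℕ) (hN : N = 16 * m ^ 2 + 1)
    (hcomp : ¬ N.Prime) :
    ∀ f : ℕ, f ∣ N → 1 < f → f < N →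
      ∃ u d : ℕ, 0 < u ∧ (8 * u + 1) ^ 2 = N + d ^ 2 ∧
        N ≤ (8 * u + 1) ^ 2 ∧ 40 * u + 5 ≤ N ∧
        (f = 8 * u + 1 + d ∨ f = 8 * u + 1 - d) :=
  stmt_7_general m N hN
end

section
/- Let m be a nonnegative integer. If N = 4(2m + 1)² + 1 is composite, then there exists a positive integer u such that (8u + 3)² − N is a perfect square and N = (8u + 3 + √((8u + 3)² − N)) · (8u + 3 − √((8u + 3)² − N)), with both factors being proper factors of N. -/
/-!
Write `N = y² + 1` with `y = 2(2m + 1)`. Since `y` is even, every prime factor of `N` is odd with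
`-1` a square modulo it, hence `≡ 1 (mod 4)`, so every divisor of `N` is `≡ 1 (mod 4)`. A proper
factorization `N = a b` with `a = 4i + 1 ≤ b = 4j + 1` then gives `N ≡ 1 + 4(i + j) (mod 16)`, and
`N ≡ 5 (mod 16)` forces `i + j ≡ 1 (mod 4)`. Hence `(a + b)/2 = 2(i + j) + 1 = 8u + 3`, and
Fermat's identity `ab = ((a + b)/2)² - ((b - a)/2)²` gives the decomposition.
-/

theorem Nat.mod_four_eq_one_of_dvd_sq_add_one_s8 {x c : ℕ} (hx : Even x) (hc : c ∣ x ^ 2 + 1) :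
    c % 4 = 1 := by
  induction c using Nat.recOnMul with
  | zero => simp at hc
  | one => rfl
  | prime p hp =>
    have hp2 : p % 2 = 1 := by
      have hodd : Odd (x ^ 2 + 1) := (hx.pow_of_ne_zero two_ne_zero).add_one
      exact Nat.odd_iff.mp (hodd.of_dvd_nat hc)
    have : Fact p.Prime := ⟨hp⟩
    have hsq : (x : ZMod p) ^ 2 = -1 := by
      have h0 : ((x ^ 2 + 1 : ℕ) : ZMod p) = 0 := (ZMod.natCast_eq_zero_iff _ _).mpr hc
      push_cast at h0
      linear_combination h0
    have := ZMod.mod_four_ne_three_of_sq_eq_neg_one hsq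
    omega
  | mul a b iha ihb =>
    rw [Nat.mul_mod, iha (dvd_of_mul_right_dvd hc), ihb (dvd_of_mul_left_dvd hc)]

theorem Nat.exists_mul_eq_of_not_prime_s8 {n : ℕ} (hn : 2 ≤ n) (hp : ¬ n.Prime) :
    ∃ a b, a * b = n ∧ 1 < a ∧ a ≤ b := by
  have hmin : 1 < n.minFac := (Nat.minFac_prime (by omega)).one_lt
  have hmul : n.minFac * (n / n.minFac) = n := Nat.mul_div_cancel' n.minFac_dvd
  refine ⟨n.minFac, n / n.minFac, hmul, hmin, ?_⟩
  have hsq : n.minFac * n.minFac ≤ n.minFac * (n / n.minFac) := by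
    rw [hmul, ← sq]
    exact Nat.minFac_sq_le_self (by omega) hp
  exact Nat.le_of_mul_le_mul_left hsq (by omega)

theorem exists_eight_mul_add_three_of_mul_mod_sixteen_eq_five {a b : ℕ} (hab : a ≤ b)
    (ha : a % 4 = 1) (hb : b % 4 = 1) (h : a * b % 16 = 5) :
    ∃ u d, a + d = 8 * u + 3 ∧ b = 8 * u + 3 + d := by
  obtain ⟨i, rfl⟩ : ∃ i, a = 4 * i + 1 := ⟨a / 4, by omega⟩
  obtain ⟨j, rfl⟩ : ∃ j, b = 4 * j + 1 := ⟨b / 4, by omega⟩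
  have hexp : (4 * i + 1) * (4 * j + 1) = 16 * (i * j) + 4 * (i + j) + 1 := by ring
  rw [hexp] at h
  exact ⟨(i + j - 1) / 4, 2 * (j - i), by omega, by omega⟩

theorem stmt_8 (m : ℕ) (N : ℕ) (hN : N = 4 * (2 * m + 1) ^ 2 + 1)
    (hcomp : ¬ N.Prime) :
    ∃ u : ℕ, 0 < u ∧ ∃ d : ℕ, (8 * u + 3) ^ 2 = N + d ^ 2 ∧
      N = (8 * u + 3 + d) * (8 * u + 3 - d) ∧
      ((8 * u + 3 + d) ∣ N ∧ 1 < 8 * u + 3 + d ∧ 8 * u + 3 + d < N) ∧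
      ((8 * u + 3 - d) ∣ N ∧ 1 < 8 * u + 3 - d ∧ 8 * u + 3 - d < N) := by
  have hN16 : N % 16 = 5 := by
    have : N = 16 * (m * m + m) + 5 := by rw [hN]; ring
    omega
  have hNsq : N = (2 * (2 * m + 1)) ^ 2 + 1 := by rw [hN]; ring
  have heven : Even (2 * (2 * m + 1)) := even_two_mul _
  obtain ⟨a, b, hab, ha1, hle⟩ := Nat.exists_mul_eq_of_not_prime_s8 (by omega) hcomp
  have ha4 := Nat.mod_four_eq_one_of_dvd_sq_add_one_s8 heven (hNsq ▸ hab ▸ dvd_mul_right a b)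
  have hb4 := Nat.mod_four_eq_one_of_dvd_sq_add_one_s8 heven (hNsq ▸ hab ▸ dvd_mul_left b a)
  obtain ⟨u, d, hs, hb⟩ :=
    exists_eight_mul_add_three_of_mul_mod_sixteen_eq_five hle ha4 hb4 (hab ▸ hN16)
  have hsub : 8 * u + 3 - d = a := by omega
  have hbN : b < N := by nlinarith
  refine ⟨u, by omega, d, ?_, ?_, ?_, ?_⟩
  · rw [← hab, hb, ← hs]; ring
  · rw [← hb, hsub, ← hab, mul_comm]
  · rw [← hb]; exact ⟨hab ▸ dvd_mul_left b a, by omega, hbN⟩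
  · rw [hsub]; exact ⟨hab ▸ dvd_mul_right a b, ha1, by omega⟩
end

section
/- Let n ≥ 4 be an integer and let F_n = 2^(2^n) + 1 be the n-th Fermat number. If F_n is composite, then there exists a positive integer s with 2^(n+2)·s < √(F_n − 1) (equivalently, (2^(n+2)·s)² < F_n − 1 or 2^(2(n+2))·s² < 2^(2^n)) such that 2^(2^n − 2(n+2)) + s² ≡ 0 (mod 2^(n+2)·s + 1); moreover 2^(n+2)·s + 1 is a proper factor of F_n. -/
/-! The least prime factor `p` of a composite `F_n` satisfies `p² ≤ F_n`, and by
Euler–Lucas it has the form `p = 2^(n+2) s + 1`. Writing `m = 2^(n+2)`, we have `ms ≡ -1` and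
`2^(2^n) ≡ -1 (mod p)`, so `m² (2^(2^n) / m² + s²) = 2^(2^n) + (ms)² ≡ 0`, and `m` is invertible
mod `p`. -/

theorem Nat.mul_add_one_dvd_add_sq {m s y : ℕ} (h : m * s + 1 ∣ m ^ 2 * y + 1) :
    m * s + 1 ∣ y + s ^ 2 := by
  have hcop : (m * s + 1).Coprime (m ^ 2) :=
    ((Nat.coprime_mul_left_add_left 1 m s).2 (Nat.coprime_one_left m)).pow_right 2
  refine hcop.dvd_of_dvd_mul_left ?_
  have key : m ^ 2 * (y + s ^ 2) + 2 * (m * s + 1) =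
      (m ^ 2 * y + 1) + (m * s + 1) * (m * s + 1) := by
    ring
  have hsum : m * s + 1 ∣ m ^ 2 * (y + s ^ 2) + 2 * (m * s + 1) :=
    key ▸ dvd_add h (dvd_mul_right _ _)
  exact (Nat.dvd_add_left (dvd_mul_left _ 2)).mp hsum

theorem Nat.two_mul_add_two_le_two_pow {n : ℕ} (hn : 4 ≤ n) : 2 * (n + 2) ≤ 2 ^ n := by
  induction n, hn using Nat.le_induction with
  | base => norm_num
  | succ m hm ih =>
    rw [pow_succ]
    omega

theorem Nat.exists_minFac_fermatNumber_eq {n : ℕ} (hn : 1 < n) :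
    ∃ s, 0 < s ∧ (fermatNumber n).minFac = 2 ^ (n + 2) * s + 1 := by
  have hp : (fermatNumber n).minFac.Prime :=
    Nat.minFac_prime (by have := two_lt_fermatNumber n; omega)
  obtain ⟨s, hs⟩ := fermat_primeFactors_one_lt n _ hn hp (minFac_dvd _)
  refine ⟨s, Nat.pos_of_ne_zero ?_, by rw [hs, mul_comm]⟩
  rintro rfl
  exact Nat.not_prime_one (by simpa [hs] using hp)

theorem stmt_16 (n : ℕ) (hn : 4 ≤ n) (F : ℕ) (hF : F = 2 ^ (2 ^ n) + 1)
    (hcomp : ¬ F.Prime) :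
    ∃ s : ℕ, 0 < s ∧ (2 ^ (n + 2) * s) ^ 2 < F - 1 ∧
      (2 ^ (n + 2) * s + 1) ∣ (2 ^ (2 ^ n - 2 * (n + 2)) + s ^ 2) ∧
      (2 ^ (n + 2) * s + 1) ∣ F ∧ 1 < 2 ^ (n + 2) * s + 1 ∧
      2 ^ (n + 2) * s + 1 < F := by
  obtain ⟨s, hs0, hs⟩ := Nat.exists_minFac_fermatNumber_eq (n := n) (by omega)
  rw [Nat.fermatNumber, ← hF] at hs
  have hF0 : 0 < F := hF ▸ Nat.succ_pos _
  have hp : F.minFac.Prime := Nat.minFac_prime (by simp [hF])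
  have hsq : F.minFac ^ 2 ≤ F := Nat.minFac_sq_le_self hF0 hcomp
  have hlt : F.minFac < F :=
    (Nat.minFac_le hF0).lt_of_ne fun h => hcomp (h ▸ hp)
  have hpow : (2 ^ (n + 2)) ^ 2 * 2 ^ (2 ^ n - 2 * (n + 2)) = 2 ^ 2 ^ n := by
    rw [← pow_mul, ← pow_add, mul_comm (n + 2),
      Nat.add_sub_cancel' (Nat.two_mul_add_two_le_two_pow hn)]
  have hr : 0 < 2 ^ (n + 2) * s := by positivity
  rw [hs] at hp hsq hlt
  refine ⟨s, hs0, Nat.lt_sub_of_add_lt (by nlinarith), Nat.mul_add_one_dvd_add_sq ?_,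
    hs ▸ Nat.minFac_dvd F, hp.one_lt, hlt⟩
  rw [hpow, ← hF, ← hs]
  exact Nat.minFac_dvd F
end

section
/- Let n ≥ 5 be an integer, F_n = 2^(2^n) + 1 the n-th Fermat number, and suppose λ is a positive integer such that (2^(2n+3)·λ + 1)² − F_n is a perfect square and both 2^(2n+3)·λ + 1 ± √((2^(2n+3)·λ + 1)² − F_n) are proper factors of F_n whose product is F_n. Then λ ≢ 0 (mod p) for every prime p ≡ 3 (mod 4), and λ ≢ 2 (mod 4). -/
/-! Writing `A = 2^(2n+3) λ + 1`, the equation `A² = F_n + d²` reads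
`2^(2n+4) (2^(2n+2) λ² + λ) = 2^(2^n) + d²`, so `2^(n+2) ∣ d`, and `d = 2^(n+2) e` gives
`2^(2n+2) λ² + λ = 2^(2m) + e²` with `2m = 2^n - 2n - 4 ≥ 2`.
A prime `p ≡ 3 (mod 4)` dividing `λ` would divide the sum of two squares `(2^m)² + e²`, hence
divide `2^m`; and modulo `4` the equation says `λ ≡ e² ∈ {0, 1}`. -/

lemma two_mul_add_six_le_two_pow {n : ℕ} (hn : 5 ≤ n) : 2 * n + 6 ≤ 2 ^ n := by
  induction n, hn using Nat.le_induction with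
  | base => norm_num
  | succ m _ ih => rw [pow_succ]; omega

lemma exists_sq_of_sq_two_pow_mul_add_one_eq {k M l d : ℕ}
    (h : (2 ^ (2 * k + 1) * l + 1) ^ 2 = 2 ^ (2 * k + 2 + M) + 1 + d ^ 2) :
    ∃ e, 2 ^ (2 * k) * l ^ 2 + l = 2 ^ M + e ^ 2 := by
  have hsplit : 2 ^ (2 * k + 2) * (2 ^ (2 * k) * l ^ 2 + l) = 2 ^ (2 * k + 2) * 2 ^ M + d ^ 2 := by
    rw [← pow_add]; ring_nf at h ⊢; linarith
  obtain ⟨e, rfl⟩ : 2 ^ (k + 1) ∣ d := by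
    rw [← Nat.pow_dvd_pow_iff two_ne_zero, ← pow_mul, show (k + 1) * 2 = 2 * k + 2 by ring]
    exact (Nat.dvd_add_right (dvd_mul_right _ _)).mp (hsplit ▸ dvd_mul_right _ _)
  refine ⟨e, Nat.eq_of_mul_eq_mul_left (by positivity : 0 < 2 ^ (2 * k + 2)) ?_⟩
  rw [hsplit]; ring

lemma Nat.Prime.dvd_of_dvd_sq_add_sq {p x y : ℕ} (hp : p.Prime) (hp3 : p % 4 = 3)
    (h : p ∣ x ^ 2 + y ^ 2) : p ∣ x := by
  have := Fact.mk hp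
  rw [← ZMod.natCast_eq_zero_iff] at h ⊢
  by_contra hx
  push_cast at h
  exact ZMod.mod_four_ne_three_of_sq_eq_neg_sq hx (eq_neg_of_add_eq_zero_left h) hp3

lemma not_dvd_of_mul_sq_add_self_eq_two_pow_add_sq {p a l m e : ℕ} (hp : p.Prime)
    (hp3 : p % 4 = 3) (h : a * l ^ 2 + l = 2 ^ (2 * m) + e ^ 2) : ¬ p ∣ l := by
  intro hpl
  rw [pow_mul'] at h
  have h2m : p ∣ 2 ^ m := hp.dvd_of_dvd_sq_add_sq hp3
    (h ▸ dvd_add (dvd_mul_of_dvd_right (dvd_pow hpl two_ne_zero) a) hpl)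
  have := (Nat.prime_dvd_prime_iff_eq hp Nat.prime_two).mp (hp.dvd_of_dvd_pow h2m)
  omega

lemma mod_four_ne_two_of_add_eq_add_sq {a l b e : ℕ} (ha : 4 ∣ a) (hb : 4 ∣ b)
    (h : a + l = b + e ^ 2) : l % 4 ≠ 2 := by
  intro hl
  have h4 := congrArg (Nat.cast : ℕ → ZMod 4) h
  rw [← ZMod.natCast_eq_zero_iff] at ha hb
  push_cast at h4
  rw [ha, hb, zero_add, zero_add, ← ZMod.natCast_mod l 4, hl] at h4
  generalize (e : ZMod 4) = x at h4
  revert x; decide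

theorem stmt_18_general (n : ℕ) (hn : 5 ≤ n) (F : ℕ) (hF : F = 2 ^ (2 ^ n) + 1)
    (l : ℕ) (d : ℕ)
    (hd : (2 ^ (2 * n + 3) * l + 1) ^ 2 = F + d ^ 2) :
    (∀ p : ℕ, p.Prime → p % 4 = 3 → ¬ p ∣ l) ∧ l % 4 ≠ 2 := by
  have hle := two_mul_add_six_le_two_pow hn
  obtain ⟨m, hm⟩ : ∃ m, 2 ^ n = 2 * (n + 1) + 2 + 2 * (m + 1) := by
    obtain ⟨c, hc⟩ := (Nat.even_pow' (by omega : n ≠ 0)).mpr even_two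
    exact ⟨c - n - 3, by omega⟩
  obtain ⟨e, he⟩ := exists_sq_of_sq_two_pow_mul_add_one_eq
    (k := n + 1) (M := 2 * (m + 1)) (l := l) (d := d) (by rw [← hm, ← hF, ← hd]; ring_nf)
  refine ⟨fun p hp hp3 ↦ not_dvd_of_mul_sq_add_self_eq_two_pow_add_sq hp hp3 he,
    mod_four_ne_two_of_add_eq_add_sq ?_ ?_ he⟩
  · exact Dvd.dvd.mul_right (pow_dvd_pow 2 (by omega : 2 ≤ 2 * (n + 1))) _
  · exact pow_dvd_pow 2 (by omega : 2 ≤ 2 * (m + 1))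

theorem stmt_18 (n : ℕ) (hn : 5 ≤ n) (F : ℕ) (hF : F = 2 ^ (2 ^ n) + 1)
    (l : ℕ) (hl : 0 < l) (d : ℕ)
    (hd : (2 ^ (2 * n + 3) * l + 1) ^ 2 = F + d ^ 2)
    (h₁ : (2 ^ (2 * n + 3) * l + 1 + d) ∣ F ∧ 1 < 2 ^ (2 * n + 3) * l + 1 + d ∧
      2 ^ (2 * n + 3) * l + 1 + d < F)
    (h₂ : (2 ^ (2 * n + 3) * l + 1 - d) ∣ F ∧ 1 < 2 ^ (2 * n + 3) * l + 1 - d ∧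
      2 ^ (2 * n + 3) * l + 1 - d < F)
    (hprod : F = (2 ^ (2 * n + 3) * l + 1 + d) * (2 ^ (2 * n + 3) * l + 1 - d)) :
    (∀ p : ℕ, p.Prime → p % 4 = 3 → ¬ p ∣ l) ∧ l % 4 ≠ 2 :=
  stmt_18_general n hn F hF l d hd
end

section
/- Let n ≥ 5 be an integer and let F_n = 2^(2^n) + 1 be the n-th Fermat number, assumed composite. Then every proper factor of F_n can be expressed as 2^(2n+3)·λ + 1 + √((2^(2n+3)·λ + 1)² − F_n) or 2^(2n+3)·λ + 1 − √((2^(2n+3)·λ + 1)² − F_n) for some positive integer λ such that (2^(2n+3)·λ + 1)² − F_n is a perfect square, F_n ≤ (2^(2n+3)·λ + 1)², and λ ≤ 2^(2^n − (3n+5)). -/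
/-!
Every divisor of `F_n` (`n ≥ 2`) is `≡ 1 [MOD 2^(n+2)]`, since its prime factors are. So a
factorisation `F_n = f g` has `f = 2^(n+2) a + 1`, `g = 2^(n+2) b + 1`, and
`a b 2^(2n+4) + (a + b) 2^(n+2) = 2^(2^n)` forces `a + b = λ 2^(n+2)`. Hence `f + g = 2m` with
`m = 2^(2n+3) λ + 1`, and `m² - F_n = d²` with `d = |f - g|/2`, so `f = m ± d`. Finally
`λ 2^(n+2) = a + b ≤ a b + 1 ≤ a b + λ = 2^(2^n - 2n - 4)` bounds `λ`.
-/

namespace Nat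

theorem modEq_one_of_dvd_of_forall_prime_dvd {N m f : ℕ} (hN : N ≠ 0)
    (h : ∀ p, p.Prime → p ∣ N → p ≡ 1 [MOD m]) (hf : f ∣ N) : f ≡ 1 [MOD m] := by
  induction f using Nat.recOnMul with
  | zero => exact absurd (Nat.eq_zero_of_zero_dvd hf) hN
  | one => rfl
  | prime p hp => exact h p hp hf
  | mul a b ha hb =>
    simpa using (ha (dvd_of_mul_right_dvd hf)).mul (hb (dvd_of_mul_left_dvd hf))

theorem modEq_one_of_dvd_fermatNumber {n f : ℕ} (hn : 1 < n) (hf : f ∣ fermatNumber n) :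
    f ≡ 1 [MOD 2 ^ (n + 2)] := by
  refine modEq_one_of_dvd_of_forall_prime_dvd (by simp [fermatNumber]) (fun p hp hpF => ?_) hf
  obtain ⟨k, rfl⟩ := fermat_primeFactors_one_lt n p hn hp hpF
  simp [ModEq]

theorem exists_eq_mul_add_one_of_modEq_one {m f : ℕ} (hf : 1 ≤ f) (h : f ≡ 1 [MOD m]) :
    ∃ a, f = a * m + 1 := by
  obtain ⟨a, ha⟩ := (modEq_iff_dvd' hf).mp h.symm
  exact ⟨a, by rw [mul_comm, ← ha]; omega⟩

theorem exists_add_eq_mul_of_mul_add_one_mul_add_one_eq {M E a b : ℕ} (hM : 0 < M)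
    (ha : 0 < a) (hb : 0 < b) (h : (a * M + 1) * (b * M + 1) = M ^ 2 * E + 1) :
    ∃ c, 0 < c ∧ a + b = c * M ∧ c * M ≤ E := by
  have hdiv : a * b * M + (a + b) = M * E := by
    apply Nat.eq_of_mul_eq_mul_right hM
    linear_combination h
  obtain ⟨c, hc⟩ : M ∣ a + b := (Nat.dvd_add_right (dvd_mul_left M _)).mp ⟨E, hdiv⟩
  have hE : a * b + c = E := by
    apply Nat.eq_of_mul_eq_mul_left hM
    linear_combination hdiv - hc
  have hc0 : 0 < c := Nat.pos_of_ne_zero (by rintro rfl; omega)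
  have hab : a + b ≤ a * b + 1 := by nlinarith
  exact ⟨c, hc0, by rw [hc, mul_comm], by rw [mul_comm, ← hc]; omega⟩

theorem exists_sq_eq_mul_add_sq_of_add_eq_two_mul {f g m : ℕ} (h : f + g = 2 * m) :
    ∃ d, m ^ 2 = f * g + d ^ 2 ∧ (f = m + d ∨ f = m - d) := by
  wlog hgf : g ≤ f generalizing f g
  · obtain ⟨d, hd, hg⟩ := this (by omega : g + f = 2 * m) (by omega)
    exact ⟨d, by rw [hd, mul_comm], by omega⟩
  refine ⟨f - m, ?_, Or.inl (by omega)⟩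
  generalize hd : f - m = d
  obtain rfl : m = g + d := by omega
  obtain rfl : f = g + 2 * d := by omega
  ring

theorem three_mul_add_six_le_two_pow {n : ℕ} (hn : 5 ≤ n) : 3 * n + 6 ≤ 2 ^ n := by
  induction n, hn using Nat.le_induction with
  | base => norm_num
  | succ k _ ih => rw [pow_succ]; omega

theorem exists_add_eq_of_mul_eq_fermatNumber {n f g : ℕ} (hn : 5 ≤ n)
    (hfg : f * g = fermatNumber n) (hf : 1 < f) (hg : 1 < g) :
    ∃ c, 0 < c ∧ f + g = 2 * (2 ^ (2 * n + 3) * c + 1) ∧ c ≤ 2 ^ (2 ^ n - (3 * n + 6)) := by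
  obtain ⟨a, rfl⟩ := exists_eq_mul_add_one_of_modEq_one hf.le
    (modEq_one_of_dvd_fermatNumber (by omega) (Dvd.intro g hfg))
  obtain ⟨b, rfl⟩ := exists_eq_mul_add_one_of_modEq_one hg.le
    (modEq_one_of_dvd_fermatNumber (by omega) (Dvd.intro_left _ hfg))
  have hF : fermatNumber n =
      (2 ^ (n + 2)) ^ 2 * (2 ^ (n + 2) * 2 ^ (2 ^ n - (3 * n + 6))) + 1 := by
    have := three_mul_add_six_le_two_pow hn
    rw [fermatNumber, ← pow_mul, ← pow_add, ← pow_add]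
    congr 2
    omega
  obtain ⟨c, hc0, hsum, hcle⟩ := exists_add_eq_mul_of_mul_add_one_mul_add_one_eq
    (by positivity) (Nat.pos_of_ne_zero (by rintro rfl; simp at hf))
    (Nat.pos_of_ne_zero (by rintro rfl; simp at hg)) (hfg.trans hF)
  refine ⟨c, hc0, ?_, le_of_mul_le_mul_left (by rwa [mul_comm] at hcle) (by positivity)⟩
  have hM : 2 ^ (n + 2) * 2 ^ (n + 2) = 2 * 2 ^ (2 * n + 3) := by
    rw [← pow_add, ← pow_succ']
    congr 1
    omega
  linear_combination 2 ^ (n + 2) * hsum + c * hM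

end Nat

theorem stmt_19_general (n : ℕ) (hn : 5 ≤ n) (F : ℕ) (hF : F = 2 ^ (2 ^ n) + 1) :
    ∀ f : ℕ, f ∣ F → 1 < f → f < F →
      ∃ l d : ℕ, 0 < l ∧ (2 ^ (2 * n + 3) * l + 1) ^ 2 = F + d ^ 2 ∧
        F ≤ (2 ^ (2 * n + 3) * l + 1) ^ 2 ∧ l ≤ 2 ^ (2 ^ n - (3 * n + 5)) ∧
        (f = 2 ^ (2 * n + 3) * l + 1 + d ∨ f = 2 ^ (2 * n + 3) * l + 1 - d) := by
  rintro f ⟨g, hfg⟩ hf hfF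
  have hg : 1 < g := by
    by_contra! hg
    interval_cases g <;> omega
  obtain ⟨l, hl, hsum, hle⟩ :=
    Nat.exists_add_eq_of_mul_eq_fermatNumber hn (hfg.symm.trans hF) hf hg
  obtain ⟨d, hsq, hfd⟩ := Nat.exists_sq_eq_mul_add_sq_of_add_eq_two_mul hsum
  refine ⟨l, d, hl, by rw [hfg, hsq], by rw [hfg, hsq]; exact le_self_add, ?_, hfd⟩
  exact hle.trans (Nat.pow_le_pow_right two_pos (by omega))

theorem stmt_19 (n : ℕ) (hn : 5 ≤ n) (F : ℕ) (hF : F = 2 ^ (2 ^ n) + 1)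
    (hcomp : ¬ F.Prime) :
    ∀ f : ℕ, f ∣ F → 1 < f → f < F →
      ∃ l d : ℕ, 0 < l ∧ (2 ^ (2 * n + 3) * l + 1) ^ 2 = F + d ^ 2 ∧
        F ≤ (2 ^ (2 * n + 3) * l + 1) ^ 2 ∧ l ≤ 2 ^ (2 ^ n - (3 * n + 5)) ∧
        (f = 2 ^ (2 * n + 3) * l + 1 + d ∨ f = 2 ^ (2 * n + 3) * l + 1 - d) :=
  stmt_19_general n hn F hF
end
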